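/- Let z = f + ig ∈ H¹(ℝ²;ℂ) with f, g real-valued, and let φ = |z| = sqrt(f² + g²). Then φ ∈ H¹(ℝ²;ℝ) and ‖∇f‖²_{L²} + ‖∇g‖²_{L²} − ‖∇φ‖²_{L²} = ∫_{f²+g²>0} Σ_{i=1}^{2} (f ∂_i g − g ∂_i f)² / (f² + g²) dx ≥ 0; in particular ‖∇z‖_{L²} ≥ ‖∇|z|‖_{L²}. -/

import Mathlib

/-
On `{z ≠ 0}` the modulus `φ = √(f² + g²)` is differentiable with `∂ᵢφ = (f ∂ᵢf + g ∂ᵢg) / φ`,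
and Lagrange's identity `(f² + g²)(a² + b²) = (f a + g b)² + (f b - g a)²` turns
`|∇f|² + |∇g|² - |∇φ|²` pointwise into `Σᵢ (f ∂ᵢg - g ∂ᵢf)² / (f² + g²)`. On the zero set `{z = 0}`
the modulus has a minimum, so `∇φ = 0` there, and `∇f = ∇g = 0` almost everywhere: at a Lebesgue
density point every direction is tangent to the zero set, so the derivative of `f` is determined by
the values of `f` on that set, which all vanish.
-/

open MeasureTheory

noncomputable section

/-- The plane `ℝ²`. -/
abbrev R2 : Type := EuclideanSpace ℝ (Fin 2)

/-- The `j`-th (classical) partial derivative of a real-valued function on `ℝ²`. -/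
noncomputable def pdR (f : R2 → ℝ) (j : Fin 2) (x : R2) : ℝ :=
  fderiv ℝ f x (EuclideanSpace.single j 1)

/-- `|∇f(x)|²` for a real-valued function. -/
noncomputable def gradsqR (f : R2 → ℝ) (x : R2) : ℝ :=
  pdR f 0 x ^ 2 + pdR f 1 x ^ 2

/-- The modulus `φ = |z| = sqrt(f² + g²)` of `z = f + ig`. -/
noncomputable def modFG (f g : R2 → ℝ) : R2 → ℝ :=
  fun x => Real.sqrt (f x ^ 2 + g x ^ 2)

open Filter Metric Set Topology Pointwise

section DensityPoint

variable {E : Type*} [NormedAddCommGroup E] [NormedSpace ℝ E] [FiniteDimensional ℝ E]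
  [MeasurableSpace E] [BorelSpace E] (μ : Measure E) [μ.IsAddHaarMeasure] {s : Set E}

theorem tangentConeAt_eq_univ_of_tendsto_density {x : E}
    (h : Tendsto (fun r => μ (s ∩ closedBall x r) / μ (closedBall x r)) (𝓝[>] 0) (𝓝 1)) :
    tangentConeAt ℝ s x = univ := by
  refine eq_univ_of_forall fun z => ?_
  rw [tangentConeAt_eq_biInter_closure]
  refine mem_iInter₂.2 fun U hU => Metric.mem_closure_iff.2 fun ε hε => ?_
  have hmeet : ∀ᶠ r in 𝓝[>] (0 : ℝ), (s ∩ ({x} + r • ball z ε)).Nonempty :=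
    Measure.eventually_nonempty_inter_smul_of_density_one μ s x h _ measurableSet_ball
      (measure_ball_pos μ z hε).ne'
  have hsmall : ∀ᶠ r in 𝓝[>] (0 : ℝ), {0} + r • ball z ε ⊆ U :=
    nhdsWithin_le_nhds (eventually_singleton_add_smul_subset isBounded_ball hU)
  obtain ⟨r, ⟨y, hys, hy⟩, hrU, hr⟩ := (hmeet.and (hsmall.and self_mem_nhdsWithin)).exists
  obtain ⟨a, ha, rfl⟩ : ∃ a ∈ ball z ε, x + r • a = y := by
    simp only [singleton_add, image_add_left, mem_preimage, mem_smul_set] at hy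
    exact hy.imp fun a ⟨ha, e⟩ => ⟨ha, by rw [e]; abel⟩
  refine ⟨a, ⟨r⁻¹, mem_univ _, r • a, ⟨hrU ?_, hys⟩, ?_⟩, mem_ball'.1 ha⟩
  · simpa using smul_mem_smul_set ha
  · simp [smul_smul, hr.ne']

theorem ae_uniqueDiffWithinAt (hs : MeasurableSet s) :
    ∀ᵐ x ∂μ.restrict s, UniqueDiffWithinAt ℝ s x := by
  filter_upwards [Besicovitch.ae_tendsto_measure_inter_div μ s, ae_restrict_mem hs]
    with x hx hxs
  refine ⟨?_, subset_closure hxs⟩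
  simp [tangentConeAt_eq_univ_of_tendsto_density μ hx]

theorem ae_fderiv_eq_zero_of_eqOn_const {F : Type*} [NormedAddCommGroup F] [NormedSpace ℝ F]
    {f : E → F} {c : F} (hs : MeasurableSet s) (hf : EqOn f (fun _ => c) s) :
    ∀ᵐ x ∂μ.restrict s, fderiv ℝ f x = 0 := by
  filter_upwards [ae_uniqueDiffWithinAt μ hs, ae_restrict_mem hs] with x hx hxs
  by_cases hd : DifferentiableAt ℝ f x
  · exact hx.eq hd.hasFDerivAt.hasFDerivWithinAt
      ((hasFDerivWithinAt_const c x s).congr hf (hf hxs))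
  · exact fderiv_zero_of_not_differentiableAt hd

end DensityPoint

theorem measurable_gradsqR (f : R2 → ℝ) : Measurable (gradsqR f) :=
  ((measurable_fderiv_apply_const ℝ f _).pow_const 2).add
    ((measurable_fderiv_apply_const ℝ f _).pow_const 2)

section Modulus

variable {f g : R2 → ℝ} {x : R2}

/-- Writing `z = ρ e^{iθ}`, this is `ρ² |∇θ|²`, since `∂ᵢθ = (f ∂ᵢg - g ∂ᵢf) / (f² + g²)`. -/
def angularGradSq (f g : R2 → ℝ) (x : R2) : ℝ :=
  ((f x * pdR g 0 x - g x * pdR f 0 x) ^ 2 + (f x * pdR g 1 x - g x * pdR f 1 x) ^ 2) /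
    (f x ^ 2 + g x ^ 2)

theorem angularGradSq_nonneg (f g : R2 → ℝ) (x : R2) : 0 ≤ angularGradSq f g x := by
  unfold angularGradSq
  positivity

theorem measurableSet_setOf_pos_sq_add_sq (hf : Continuous f) (hg : Continuous g) :
    MeasurableSet {x | 0 < f x ^ 2 + g x ^ 2} :=
  (isOpen_lt continuous_const (by fun_prop)).measurableSet

theorem modFG_le_abs_add_abs (x : R2) : modFG f g x ≤ |f x| + |g x| := by
  refine Real.sqrt_le_iff.2 ⟨by positivity, ?_⟩
  nlinarith [sq_abs (f x), sq_abs (g x), abs_nonneg (f x), abs_nonneg (g x)]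

theorem memLp_modFG (hf : MemLp f 2 volume) (hg : MemLp g 2 volume) :
    MemLp (modFG f g) 2 volume := by
  have hmeas : AEStronglyMeasurable (modFG f g) volume :=
    ((hf.1.aemeasurable.pow_const 2).add (hg.1.aemeasurable.pow_const 2)).sqrt.aestronglyMeasurable
  refine (hf.abs.add hg.abs).of_le hmeas (.of_forall fun x => ?_)
  simp only [Real.norm_eq_abs, modFG, abs_of_nonneg (Real.sqrt_nonneg _)]
  exact (modFG_le_abs_add_abs x).trans (le_abs_self _)

theorem pdR_modFG (hf : DifferentiableAt ℝ f x) (hg : DifferentiableAt ℝ g x)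
    (hx : 0 < f x ^ 2 + g x ^ 2) (j : Fin 2) :
    pdR (modFG f g) j x = (f x * pdR f j x + g x * pdR g j x) / modFG f g x := by
  have hφ : HasFDerivAt (modFG f g) _ x :=
    ((hf.hasFDerivAt.pow 2).add (hg.hasFDerivAt.pow 2)).sqrt hx.ne'
  have hφ0 : modFG f g x ≠ 0 := (Real.sqrt_pos.2 hx).ne'
  simp only [pdR, hφ.fderiv, FunLike.coe_smul, FunLike.coe_add, Pi.smul_apply, Pi.add_apply,
    smul_eq_mul]
  change 1 / (2 * modFG f g x) * _ = _
  field_simp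
  ring

theorem gradsqR_add_gradsqR_sub_gradsqR_modFG (hf : DifferentiableAt ℝ f x)
    (hg : DifferentiableAt ℝ g x) (hx : 0 < f x ^ 2 + g x ^ 2) :
    gradsqR f x + gradsqR g x - gradsqR (modFG f g) x = angularGradSq f g x := by
  have hφ : modFG f g x ^ 2 = f x ^ 2 + g x ^ 2 := Real.sq_sqrt hx.le
  rw [gradsqR, gradsqR, gradsqR, pdR_modFG hf hg hx, pdR_modFG hf hg hx, div_pow, div_pow, hφ,
    angularGradSq]
  field_simp
  ring

theorem gradsqR_modFG_of_not_pos (hx : ¬ 0 < f x ^ 2 + g x ^ 2) : gradsqR (modFG f g) x = 0 := by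
  have hmin : IsLocalMin (modFG f g) x := .of_forall fun y => by
    simp only [modFG, Real.sqrt_eq_zero'.2 (not_lt.1 hx), Real.sqrt_nonneg]
  simp [gradsqR, pdR, hmin.fderiv_eq_zero]

theorem gradsqR_modFG_le (hf : Differentiable ℝ f) (hg : Differentiable ℝ g) (x : R2) :
    gradsqR (modFG f g) x ≤ gradsqR f x + gradsqR g x := by
  by_cases hx : 0 < f x ^ 2 + g x ^ 2
  · linarith [gradsqR_add_gradsqR_sub_gradsqR_modFG (hf x) (hg x) hx, angularGradSq_nonneg f g x]
  · rw [gradsqR_modFG_of_not_pos hx, gradsqR, gradsqR]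
    positivity

theorem integrable_gradsqR_modFG (hf : Differentiable ℝ f) (hg : Differentiable ℝ g)
    (hfg : Integrable (gradsqR f) volume) (hgg : Integrable (gradsqR g) volume) :
    Integrable (gradsqR (modFG f g)) volume :=
  (hfg.add hgg).mono' (measurable_gradsqR _).aestronglyMeasurable <| .of_forall fun x => by
    rw [Real.norm_eq_abs, abs_of_nonneg (by rw [gradsqR]; positivity)]
    exact gradsqR_modFG_le hf hg x

theorem gradsqR_add_gradsqR_sub_gradsqR_modFG_ae_eq (hf : Differentiable ℝ f)
    (hg : Differentiable ℝ g) :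
    (fun x => gradsqR f x + gradsqR g x - gradsqR (modFG f g) x)
      =ᵐ[volume] {x | 0 < f x ^ 2 + g x ^ 2}.indicator (angularGradSq f g) := by
  set S := {x | 0 < f x ^ 2 + g x ^ 2}
  have hSc : MeasurableSet Sᶜ :=
    (measurableSet_setOf_pos_sq_add_sq hf.continuous hg.continuous).compl
  have hzero : ∀ u : R2 → ℝ, EqOn u (fun _ => 0) Sᶜ → ∀ᵐ x, x ∈ Sᶜ → gradsqR u x = 0 :=
    fun u hu => (ae_restrict_iff' hSc).1 <| (ae_fderiv_eq_zero_of_eqOn_const volume hSc hu).mono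
      fun x hx => by simp [gradsqR, pdR, hx]
  have hS0 : ∀ x ∈ Sᶜ, f x = 0 ∧ g x = 0 := fun x hx => by
    simp only [S, mem_compl_iff, mem_ofPred_eq, not_lt] at hx
    constructor <;> nlinarith [sq_nonneg (f x), sq_nonneg (g x)]
  filter_upwards [hzero f fun x hx => (hS0 x hx).1, hzero g fun x hx => (hS0 x hx).2]
    with x hfx hgx
  by_cases hx : x ∈ S
  · rw [indicator_of_mem hx, gradsqR_add_gradsqR_sub_gradsqR_modFG (hf x) (hg x) hx]
  · rw [indicator_of_notMem hx, hfx hx, hgx hx, gradsqR_modFG_of_not_pos hx, sub_zero, add_zero]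

end Modulus

/-- For `z = f + ig ∈ H¹(ℝ²;ℂ)`, the modulus `φ = |z|` lies in `H¹(ℝ²;ℝ)` and
`‖∇f‖₂² + ‖∇g‖₂² − ‖∇φ‖₂² = ∫_{f²+g²>0} Σᵢ (f ∂ᵢg − g ∂ᵢf)²/(f²+g²) ≥ 0`;
in particular `‖∇|z|‖₂ ≤ ‖∇z‖₂`. -/
theorem stmt19 (f g : R2 → ℝ) (hf : Differentiable ℝ f) (hg : Differentiable ℝ g)
    (hf2 : MemLp f 2 volume) (hg2 : MemLp g 2 volume)
    (hfg : Integrable (gradsqR f) volume) (hgg : Integrable (gradsqR g) volume) :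
    MemLp (modFG f g) 2 volume ∧
    Integrable (gradsqR (modFG f g)) volume ∧
    (∫ x : R2, (gradsqR f x + gradsqR g x)) - (∫ x : R2, gradsqR (modFG f g) x)
      = ∫ x in {x : R2 | 0 < f x ^ 2 + g x ^ 2},
          ((f x * pdR g 0 x - g x * pdR f 0 x) ^ 2 +
            (f x * pdR g 1 x - g x * pdR f 1 x) ^ 2) / (f x ^ 2 + g x ^ 2) ∧
    (∫ x : R2, gradsqR (modFG f g) x) ≤ ∫ x : R2, (gradsqR f x + gradsqR g x) := by
  have hφ := integrable_gradsqR_modFG hf hg hfg hgg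
  have hdefect : (∫ x : R2, (gradsqR f x + gradsqR g x)) - (∫ x : R2, gradsqR (modFG f g) x)
      = ∫ x in {x : R2 | 0 < f x ^ 2 + g x ^ 2}, angularGradSq f g x := by
    calc _ = ∫ x, (gradsqR f x + gradsqR g x - gradsqR (modFG f g) x) :=
          (integral_sub (hfg.add hgg) hφ).symm
      _ = _ := by
          rw [integral_congr_ae (gradsqR_add_gradsqR_sub_gradsqR_modFG_ae_eq hf hg),
            integral_indicator (measurableSet_setOf_pos_sq_add_sq hf.continuous hg.continuous)]
  refine ⟨memLp_modFG hf2 hg2, hφ, hdefect, sub_nonneg.1 ?_⟩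
  exact hdefect ▸ integral_nonneg (angularGradSq_nonneg f g)
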